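/- arXiv:1407.6288 — 3 statements merged into one kernel-verified Lean document; each statement's English description precedes it below -/
import Mathlib

section
/- Let V be a Laplace(0,1) random variable. Then for every real c, E[sign(V + c) · V] = (1 + |c|) e^{-|c|}, and in particular 0 < E[sign(V + c) · V] ≤ 1. -/
open MeasureTheory ProbabilityTheory Real

/-- Sign function with `sgn 0 = 1`. -/
noncomputable def sgn (x : ℝ) : ℝ := if x < 0 then -1 else 1

/-- The Laplace(0,1) distribution: density `v ↦ (1/2) exp (-|v|)` w.r.t. Lebesgue. -/
noncomputable def laplaceMeasure : Measure ℝ :=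
  (volume : Measure ℝ).withDensity fun v => ENNReal.ofReal ((1 : ℝ) / 2 * Real.exp (-|v|))

/-!
The function `v ↦ v · ½e^{-|v|}` has the even primitive `P v = -½ (1 + |v|) e^{-|v|}`, which
vanishes at `±∞`. Splitting the expectation at `v = -c`, where `sgn (v + c)` changes sign, gives
`E[sgn (V + c) V] = ∫_{-c}^{∞} v ½e^{-|v|} dv - ∫_{-∞}^{-c} v ½e^{-|v|} dv = -2 P(-c)`, which is
`(1 + |c|) e^{-|c|}`; it lies in `(0, 1]` since `1 + x ≤ eˣ`.
-/

open Set Filter Topology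

@[fun_prop]
lemma measurable_sgn : Measurable sgn :=
  Measurable.ite measurableSet_Iio measurable_const measurable_const

lemma integral_sgn_add_mul {φ : ℝ → ℝ} (hφ : Integrable φ) (c : ℝ) :
    ∫ v, sgn (v + c) * φ v = (∫ v in Ici (-c), φ v) - ∫ v in Iio (-c), φ v := by
  have h_lt : EqOn (fun v => sgn (v + c) * φ v) (fun v => -φ v) (Iio (-c)) := fun v hv => by
    simp [sgn, show v + c < 0 by linarith [mem_Iio.mp hv]]
  have h_ge : EqOn (fun v => sgn (v + c) * φ v) φ (Ici (-c)) := fun v hv => by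
    simp [sgn, show ¬ v + c < 0 by linarith [mem_Ici.mp hv]]
  rw [← intervalIntegral.integral_Iio_add_Ici
      (hφ.integrableOn.neg.congr_fun h_lt.symm measurableSet_Iio)
      (hφ.integrableOn.congr_fun h_ge.symm measurableSet_Ici),
    setIntegral_congr_fun measurableSet_Iio h_lt, setIntegral_congr_fun measurableSet_Ici h_ge,
    integral_neg]
  ring

noncomputable def laplaceDensity (v : ℝ) : ℝ := 1 / 2 * exp (-|v|)

lemma laplaceDensity_neg (x : ℝ) : laplaceDensity (-x) = laplaceDensity x := by
  simp [laplaceDensity]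

lemma continuous_laplaceDensity : Continuous laplaceDensity := by
  unfold laplaceDensity; fun_prop

lemma integral_laplaceMeasure (g : ℝ → ℝ) :
    ∫ v, g v ∂laplaceMeasure = ∫ v, laplaceDensity v * g v := by
  have h_meas : Measurable fun v : ℝ => ENNReal.ofReal (1 / 2 * exp (-|v|)) := by fun_prop
  rw [laplaceMeasure, integral_withDensity_eq_integral_toReal_smul h_meas
    (ae_of_all _ fun _ => ENNReal.ofReal_lt_top)]
  refine integral_congr_ae (ae_of_all _ fun v => ?_)
  simp only [smul_eq_mul, laplaceDensity]
  rw [ENNReal.toReal_ofReal (by positivity)]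

lemma hasDerivAt_one_add_mul_exp_neg (u : ℝ) :
    HasDerivAt (fun u => (1 + u) * exp (-u)) (-(u * exp (-u))) u :=
  (((hasDerivAt_id' u).const_add 1).fun_mul (hasDerivAt_neg u).exp).congr_deriv (by ring)

lemma tendsto_one_add_mul_exp_neg_atTop :
    Tendsto (fun u => (1 + u) * exp (-u)) atTop (𝓝 0) := by
  have := tendsto_exp_neg_atTop_nhds_zero.add (tendsto_pow_mul_exp_neg_atTop_nhds_zero 1)
  simpa [add_mul] using this

lemma one_add_mul_exp_neg_le_one (x : ℝ) : (1 + x) * exp (-x) ≤ 1 := by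
  rw [exp_neg, ← div_eq_mul_inv, div_le_one (exp_pos x)]
  linarith [add_one_le_exp x]

noncomputable def laplacePrimitive (v : ℝ) : ℝ := -(1 / 2) * ((1 + |v|) * exp (-|v|))

lemma continuous_laplacePrimitive : Continuous laplacePrimitive := by
  unfold laplacePrimitive; fun_prop

lemma hasDerivAt_laplacePrimitive (x : ℝ) :
    HasDerivAt laplacePrimitive (x * laplaceDensity x) x := by
  -- `|·|` is not differentiable at `0`, but the derivative extends continuously there.
  refine hasDerivAt_of_hasDerivAt_of_ne' (g := fun x => x * laplaceDensity x) (x := 0)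
    (fun y hy => ?_)
    continuous_laplacePrimitive.continuousAt
    (continuous_id.mul continuous_laplaceDensity).continuousAt x
  refine (((hasDerivAt_one_add_mul_exp_neg |y|).comp y (hasDerivAt_abs hy)).const_mul
    (-(1 / 2))).congr_deriv ?_
  unfold laplaceDensity
  linear_combination (1 / 2 * exp (-|y|)) * abs_mul_sign y

lemma tendsto_laplacePrimitive_atTop : Tendsto laplacePrimitive atTop (𝓝 0) := by
  have := (tendsto_one_add_mul_exp_neg_atTop.comp tendsto_abs_atTop_atTop).const_mul (-(1 / 2))
  rwa [mul_zero] at this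

lemma tendsto_laplacePrimitive_atBot : Tendsto laplacePrimitive atBot (𝓝 0) := by
  have := (tendsto_one_add_mul_exp_neg_atTop.comp tendsto_abs_atBot_atTop).const_mul (-(1 / 2))
  rwa [mul_zero] at this

lemma integrable_mul_laplaceDensity : Integrable fun x => x * laplaceDensity x := by
  have h_Ioi : IntegrableOn (fun x => x * laplaceDensity x) (Ioi 0) :=
    integrableOn_Ioi_deriv_of_nonneg' (fun x _ => hasDerivAt_laplacePrimitive x)
      (fun x hx => mul_nonneg (le_of_lt hx) (by unfold laplaceDensity; positivity))
      tendsto_laplacePrimitive_atTop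
  have h_Iio : IntegrableOn (fun x => x * laplaceDensity x) (Iio 0) := by
    rw [← neg_zero] at h_Ioi
    have h_odd := h_Ioi.comp_neg_Iio
    simp only [neg_mul, laplaceDensity_neg] at h_odd
    exact integrableOn_neg_iff.mp h_odd
  rw [← integrableOn_univ, ← Iio_union_Ici]
  exact h_Iio.union ((integrableOn_Ici_iff_integrableOn_Ioi).mpr h_Ioi)

lemma integral_Ioi_mul_laplaceDensity (t : ℝ) :
    ∫ x in Ioi t, x * laplaceDensity x = -laplacePrimitive t := by
  rw [integral_Ioi_of_hasDerivAt_of_tendsto' (fun x _ => hasDerivAt_laplacePrimitive x)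
    integrable_mul_laplaceDensity.integrableOn tendsto_laplacePrimitive_atTop, zero_sub]

lemma integral_Iic_mul_laplaceDensity (t : ℝ) :
    ∫ x in Iic t, x * laplaceDensity x = laplacePrimitive t := by
  rw [integral_Iic_of_hasDerivAt_of_tendsto' (fun x _ => hasDerivAt_laplacePrimitive x)
    integrable_mul_laplaceDensity.integrableOn tendsto_laplacePrimitive_atBot, sub_zero]

lemma integral_sgn_add_mul_laplaceMeasure (c : ℝ) :
    ∫ v, sgn (v + c) * v ∂laplaceMeasure = (1 + |c|) * exp (-|c|) := by
  have h_density : ∫ v, sgn (v + c) * v ∂laplaceMeasure =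
      ∫ v, sgn (v + c) * (v * laplaceDensity v) := by
    rw [integral_laplaceMeasure]
    congr with v
    ring
  rw [h_density, integral_sgn_add_mul integrable_mul_laplaceDensity,
    integral_Ici_eq_integral_Ioi, ← integral_Iic_eq_integral_Iio,
    integral_Ioi_mul_laplaceDensity, integral_Iic_mul_laplaceDensity, laplacePrimitive, abs_neg]
  ring

theorem stmt2_general {Ω : Type*} [MeasurableSpace Ω] (μ : Measure Ω)
    (V : Ω → ℝ) (hV : Measurable V) (hVlaw : μ.map V = laplaceMeasure) (c : ℝ) :
    (∫ ω, sgn (V ω + c) * V ω ∂μ = (1 + |c|) * Real.exp (-|c|)) ∧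
    0 < ∫ ω, sgn (V ω + c) * V ω ∂μ ∧ (∫ ω, sgn (V ω + c) * V ω ∂μ) ≤ 1 := by
  have h_law : ∫ ω, sgn (V ω + c) * V ω ∂μ = ∫ v, sgn (v + c) * v ∂laplaceMeasure := by
    rw [← hVlaw, integral_map hV.aemeasurable (by fun_prop)]
  rw [h_law, integral_sgn_add_mul_laplaceMeasure]
  exact ⟨rfl, by positivity, one_add_mul_exp_neg_le_one |c|⟩

/-- If `V` is Laplace(0,1) then for every real `c`,
`E[sign(V + c) · V] = (1 + |c|) e^{-|c|}`, and `0 < E[sign(V + c) · V] ≤ 1`. -/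
theorem stmt2 {Ω : Type*} [MeasurableSpace Ω] (μ : Measure Ω) [IsProbabilityMeasure μ]
    (V : Ω → ℝ) (hV : Measurable V) (hVlaw : μ.map V = laplaceMeasure) (c : ℝ) :
    (∫ ω, sgn (V ω + c) * V ω ∂μ = (1 + |c|) * Real.exp (-|c|)) ∧
    0 < ∫ ω, sgn (V ω + c) * V ω ∂μ ∧ (∫ ω, sgn (V ω + c) * V ω ∂μ) ≤ 1 :=
  stmt2_general μ V hV hVlaw c
end

section
/- Let A, Ā be symmetric n×n real matrices, where Ā has rank r and its smallest nonzero eigenvalue (in absolute value, equal to the spectral gap between the r-th and (r+1)-th eigenvalues) is at least α > 0. Let Û and U span the top-r eigenspaces of A and Ā respectively (as n×r matrices with orthonormal columns). Then there exists an r×r orthogonal matrix Q with ‖Û − U Q‖_F ≤ (2√(2r)/α) ‖A − Ā‖, where ‖·‖ is the operator norm. -/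
/-!
Write `ε = ‖A - Abar‖`, `K = Uᵀ Û` and `N = Ŵᵀ U`, so that `K Kᵀ + Nᵀ N = 1`. The singular values of
`K` therefore lie in `[0, 1]`, and the orthogonal factor `Q` of its polar decomposition satisfies
`tr (K Kᵀ) ≤ tr (Qᵀ K)`; hence `‖Û - U Q‖_F² = 2r - 2 tr (Qᵀ K) ≤ 2 ‖N‖_F²`.

The span of `Û` and one column of `Ŵ` has dimension `r + 1`, so it contains a unit vector `v` with
`Uᵀ v = 0`; as the Rayleigh quotient of `A` on that span is at least `Ev j`, we get
`Ev j ≤ vᵀ A v = vᵀ (A - Abar) v ≤ ε`. So if `2ε < α`, the gap between `Ev` and `Lam` is at least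
`α / 2`, and the identity `Ŵᵀ (A - Abar) U = diag Ev · N - N · diag Lam`, read entrywise, gives
`(α / 2)² ‖N‖_F² ≤ ‖Ŵᵀ (A - Abar) U‖_F² ≤ r ε²`. If `2ε ≥ α`, the trivial bound `‖N‖_F² ≤ r`
suffices.
-/

open Matrix Real

noncomputable def frobNorm {m k : ℕ} (M : Matrix (Fin m) (Fin k) ℝ) : ℝ :=
  Real.sqrt (∑ i, ∑ j, (M i j) ^ 2)

noncomputable def opNorm {m : ℕ} (M : Matrix (Fin m) (Fin m) ℝ) : ℝ :=
  ‖Matrix.toEuclideanCLM (𝕜 := ℝ) M‖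

namespace Matrix

variable {m k k' : Type*} [Fintype m] [Fintype k] [Fintype k']

lemma dotProduct_mulVec_eq_transpose_mulVec (M : Matrix m k ℝ) (x : m → ℝ) (y : k → ℝ) :
    x ⬝ᵥ (M *ᵥ y) = (Mᵀ *ᵥ x) ⬝ᵥ y := by
  rw [dotProduct_mulVec, mulVec_transpose]

lemma exists_ne_zero_mulVec_eq_zero_of_card_lt {K : Type*} [Field K] (M : Matrix m k K)
    (h : Fintype.card m < Fintype.card k) : ∃ c ≠ 0, M *ᵥ c = 0 := by
  obtain ⟨c, hc, hc0⟩ := (Submodule.ne_bot_iff _).mp <|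
    LinearMap.ker_ne_bot_of_finrank_lt (f := M.mulVecLin) (by simpa using h)
  exact ⟨c, hc0, hc⟩

omit [Fintype k] [Fintype k'] in
lemma transpose_mul_comm_eq_zero {Uhat : Matrix m k ℝ} {What : Matrix m k' ℝ}
    (hUW : Uhatᵀ * What = 0) : Whatᵀ * Uhat = 0 := by
  simpa using congrArg transpose hUW

lemma card_le_card_of_transpose_mul_self_eq_one [DecidableEq k] {U : Matrix m k ℝ}
    (hU : Uᵀ * U = 1) : Fintype.card k ≤ Fintype.card m := by
  have := rank_mul_le_right Uᵀ U
  rw [hU, rank_one] at this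
  exact this.trans (rank_le_card_height U)

lemma mul_transpose_add_mul_transpose_eq_one [DecidableEq m] [DecidableEq k] [DecidableEq k']
    (e : m ≃ k ⊕ k') {Uhat : Matrix m k ℝ} {What : Matrix m k' ℝ}
    (hUhat : Uhatᵀ * Uhat = 1) (hWhat : Whatᵀ * What = 1) (hUW : Uhatᵀ * What = 0) :
    Uhat * Uhatᵀ + What * Whatᵀ = 1 := by
  rw [← fromCols_mul_fromRows, fromCols_mul_fromRows_eq_one_comm e, fromRows_mul_fromCols, hUhat,
    hWhat, hUW, transpose_mul_comm_eq_zero hUW, fromBlocks_one]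

section Orthogonal

variable {ι : Type*} [Fintype ι] [DecidableEq ι]

lemma exists_orthogonal_eq_mul_diagonal_sqrt {G : Matrix ι ι ℝ} {μ : ι → ℝ}
    (hG : Gᵀ * G = diagonal μ) :
    ∃ W : Matrix ι ι ℝ, Wᵀ * W = 1 ∧ G = W * diagonal fun j => √(μ j) := by
  have hgram : ∀ j k, G.col k ⬝ᵥ G.col j = if j = k then μ j else 0 := by
    intro j k
    simpa [mul_apply, diagonal_apply, dotProduct, mul_comm] using congrFun (congrFun hG j) k
  have hμ : ∀ j, 0 ≤ μ j := fun j => by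
    simpa [hgram] using dotProduct_star_self_nonneg (G.col j)
  set v : ι → EuclideanSpace ℝ ι := fun j => (√(μ j))⁻¹ • WithLp.toLp 2 (G.col j)
  have hv : Orthonormal ℝ ({j | μ j ≠ 0}.domRestrict v) := by
    rw [orthonormal_iff_ite]
    rintro ⟨j, hj⟩ ⟨k, hk⟩
    simp only [Set.domRestrict_apply, v, real_inner_smul_left, real_inner_smul_right,
      EuclideanSpace.inner_toLp_toLp, star_trivial, hgram, Subtype.mk.injEq]
    split_ifs with hjk
    · subst hjk
      field_simp
      rw [sq_sqrt (hμ j), div_self hj]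
    · simp
  obtain ⟨c, hc⟩ := hv.exists_orthonormalBasis_extension_of_card_eq (by simp)
  refine ⟨(EuclideanSpace.basisFun ι ℝ).toBasis.toMatrix c.toBasis, ?_, ?_⟩
  · have := (EuclideanSpace.basisFun ι ℝ).toMatrix_orthonormalBasis_mem_unitary c
    rwa [mem_unitaryGroup_iff', star_eq_conjTranspose, conjTranspose_eq_transpose_of_trivial]
      at this
  · ext i j
    simp only [OrthonormalBasis.coe_toBasis, mul_diagonal, Module.Basis.toMatrix_apply,
      OrthonormalBasis.coe_toBasis_repr_apply, EuclideanSpace.basisFun_repr]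
    by_cases hj : μ j = 0
    · have hcol : G.col j = 0 := by
        simpa [hgram, hj] using (dotProduct_self_eq_zero (v := G.col j))
      simpa [hj] using congrFun hcol i
    · have : √(μ j) ≠ 0 := (sqrt_pos.mpr ((hμ j).lt_of_ne (Ne.symm hj))).ne'
      rw [hc j hj]
      simp only [PiLp.smul_apply, col_apply, smul_eq_mul, v]
      field_simp

theorem exists_svd (K : Matrix ι ι ℝ) :
    ∃ V W : Matrix ι ι ℝ, ∃ σ : ι → ℝ,
      Vᵀ * V = 1 ∧ Wᵀ * W = 1 ∧ 0 ≤ σ ∧ K = V * diagonal σ * Wᵀ := by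
  have hS : (K * Kᵀ).IsHermitian := by
    simpa [conjTranspose_eq_transpose_of_trivial] using isHermitian_mul_conjTranspose_self K
  set V : Matrix ι ι ℝ := (hS.eigenvectorUnitary : Matrix ι ι ℝ)
  have hVV : Vᵀ * V = 1 := by
    simpa [V, star_eq_conjTranspose, conjTranspose_eq_transpose_of_trivial] using
      Unitary.coe_star_mul_self hS.eigenvectorUnitary
  have hdiag : (Kᵀ * V)ᵀ * (Kᵀ * V) = diagonal hS.eigenvalues := by
    have := hS.conjStarAlgAut_star_eigenvectorUnitary
    simp only [Unitary.conjStarAlgAut_apply, star_eq_conjTranspose,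
      conjTranspose_eq_transpose_of_trivial, RCLike.ofReal_real_eq_id, CompTriple.comp_eq] at this
    rw [transpose_mul, transpose_transpose, ← Matrix.mul_assoc, Matrix.mul_assoc Vᵀ]
    exact this
  obtain ⟨W, hWW, hKV⟩ := exists_orthogonal_eq_mul_diagonal_sqrt hdiag
  refine ⟨V, W, fun j => √(hS.eigenvalues j), hVV, hWW, fun j => sqrt_nonneg _, ?_⟩
  calc K = V * (Kᵀ * V)ᵀ := by
        rw [transpose_mul, transpose_transpose, ← Matrix.mul_assoc, mul_eq_one_comm.mp hVV,
          Matrix.one_mul]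
    _ = V * diagonal (fun j => √(hS.eigenvalues j)) * Wᵀ := by
        rw [hKV, transpose_mul, diagonal_transpose, Matrix.mul_assoc]

theorem exists_orthogonal_trace_mul_transpose_le (K : Matrix ι ι ℝ)
    (hK : (1 - K * Kᵀ).PosSemidef) :
    ∃ Q : Matrix ι ι ℝ, Qᵀ * Q = 1 ∧ (K * Kᵀ).trace ≤ (Qᵀ * K).trace := by
  obtain ⟨V, W, σ, hVV, hWW, hσ, rfl⟩ := exists_svd K
  have hWW' : W * Wᵀ = 1 := mul_eq_one_comm.mp hWW
  have hKK : (V * diagonal σ * Wᵀ) * (V * diagonal σ * Wᵀ)ᵀ = V * diagonal (σ * σ) * Vᵀ := by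
    simp only [transpose_mul, transpose_transpose, diagonal_transpose, Matrix.mul_assoc]
    rw [← Matrix.mul_assoc Wᵀ W, hWW, Matrix.one_mul, ← Matrix.mul_assoc (diagonal σ),
      diagonal_mul_diagonal]
    rfl
  have hσ1 : ∀ j, σ j ≤ 1 := by
    intro j
    have := (hK.conjTranspose_mul_mul_same V).diag_nonneg (i := j)
    rw [hKK, conjTranspose_eq_transpose_of_trivial, Matrix.mul_sub, Matrix.sub_mul, Matrix.mul_one,
      hVV, ← Matrix.mul_assoc, ← Matrix.mul_assoc, hVV, Matrix.one_mul, Matrix.mul_assoc, hVV,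
      Matrix.mul_one] at this
    have hj : 0 ≤ 1 - σ j * σ j := by simpa [one_apply] using this
    nlinarith [hσ j]
  refine ⟨V * Wᵀ, ?_, ?_⟩
  · rw [transpose_mul, transpose_transpose, Matrix.mul_assoc, ← Matrix.mul_assoc Vᵀ, hVV,
      Matrix.one_mul, hWW']
  · rw [hKK, trace_mul_cycle, hVV, Matrix.one_mul, transpose_mul, transpose_transpose,
      Matrix.mul_assoc, ← Matrix.mul_assoc Vᵀ, ← Matrix.mul_assoc Vᵀ, hVV, Matrix.one_mul,
      trace_mul_comm, Matrix.mul_assoc, hWW, Matrix.mul_one, trace_diagonal, trace_diagonal]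
    exact Finset.sum_le_sum fun j _ => mul_le_of_le_one_left (hσ j) (hσ1 j)

end Orthogonal

section Trace

lemma trace_transpose_mul_self_eq_sum (M : Matrix m k ℝ) :
    (Mᵀ * M).trace = ∑ i, ∑ j, M i j ^ 2 := by
  rw [trace, Finset.sum_comm]
  simp [mul_apply, sq]

lemma trace_transpose_mul_self_nonneg (M : Matrix m k ℝ) : 0 ≤ (Mᵀ * M).trace := by
  rw [trace_transpose_mul_self_eq_sum]
  positivity

lemma sq_mul_trace_le_of_gap [DecidableEq m] [DecidableEq k] (N : Matrix m k ℝ) (e : m → ℝ)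
    (l : k → ℝ) {δ : ℝ} (hδ : 0 ≤ δ) (hgap : ∀ i j, δ ≤ l j - e i) :
    δ ^ 2 * (Nᵀ * N).trace ≤
      ((diagonal e * N - N * diagonal l)ᵀ * (diagonal e * N - N * diagonal l)).trace := by
  simp only [trace_transpose_mul_self_eq_sum, Finset.mul_sum, sub_apply, diagonal_mul,
    mul_diagonal]
  refine Finset.sum_le_sum fun i _ => Finset.sum_le_sum fun j _ => ?_
  have := hgap i j
  nlinarith [sq_nonneg (N i j), mul_le_mul this this hδ (hδ.trans this)]

lemma trace_transpose_mul_self_transpose_mul_le {p : Type*} [Fintype p] [DecidableEq m]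
    {Uhat : Matrix m k ℝ} {What : Matrix m k' ℝ} (hC : Uhat * Uhatᵀ + What * Whatᵀ = 1)
    (Y : Matrix m p ℝ) : ((Whatᵀ * Y)ᵀ * (Whatᵀ * Y)).trace ≤ (Yᵀ * Y).trace := by
  have hsplit : Yᵀ * Y = (Uhatᵀ * Y)ᵀ * (Uhatᵀ * Y) + (Whatᵀ * Y)ᵀ * (Whatᵀ * Y) := by
    calc Yᵀ * Y = Yᵀ * (Uhat * Uhatᵀ + What * Whatᵀ) * Y := by rw [hC, Matrix.mul_one]
      _ = _ := by
        simp only [transpose_mul, transpose_transpose, Matrix.mul_add, Matrix.add_mul,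
          Matrix.mul_assoc]
  rw [hsplit, trace_add]
  linarith [trace_transpose_mul_self_nonneg (Uhatᵀ * Y)]

lemma trace_sub_mul_transpose_mul_sub_mul [DecidableEq k] {Uhat U : Matrix m k ℝ}
    {Q : Matrix k k ℝ} (hUhat : Uhatᵀ * Uhat = 1) (hU : Uᵀ * U = 1) (hQ : Qᵀ * Q = 1) :
    ((Uhat - U * Q)ᵀ * (Uhat - U * Q)).trace =
      2 * Fintype.card k - 2 * (Qᵀ * (Uᵀ * Uhat)).trace := by
  have hUQ : (U * Q)ᵀ * (U * Q) = 1 := by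
    rw [transpose_mul, Matrix.mul_assoc, ← Matrix.mul_assoc Uᵀ, hU, Matrix.one_mul, hQ]
  have hcross : (Uhatᵀ * (U * Q)).trace = (Qᵀ * (Uᵀ * Uhat)).trace := by
    rw [← trace_transpose, transpose_mul, transpose_mul, transpose_transpose, Matrix.mul_assoc]
  rw [transpose_sub, Matrix.sub_mul, Matrix.mul_sub, Matrix.mul_sub, hUhat, hUQ, trace_sub,
    trace_sub, trace_sub, hcross, transpose_mul, Matrix.mul_assoc, trace_one]
  ring

theorem exists_orthogonal_trace_sub_mul_le [DecidableEq m] [DecidableEq k]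
    {Uhat U : Matrix m k ℝ} {What : Matrix m k' ℝ} (hUhat : Uhatᵀ * Uhat = 1) (hU : Uᵀ * U = 1)
    (hC : Uhat * Uhatᵀ + What * Whatᵀ = 1) :
    ∃ Q : Matrix k k ℝ, Qᵀ * Q = 1 ∧
      ((Uhat - U * Q)ᵀ * (Uhat - U * Q)).trace ≤ 2 * ((Whatᵀ * U)ᵀ * (Whatᵀ * U)).trace := by
  set K := Uᵀ * Uhat
  set N := Whatᵀ * U
  have hKN : K * Kᵀ + Nᵀ * N = 1 := by
    simp only [K, N, transpose_mul, transpose_transpose, Matrix.mul_assoc, ← Matrix.mul_add]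
    rw [← Matrix.mul_assoc Uhat, ← Matrix.mul_assoc What, ← Matrix.add_mul, hC, Matrix.one_mul, hU]
  obtain ⟨Q, hQ, hKQ⟩ := exists_orthogonal_trace_mul_transpose_le K
    (by rw [← hKN, add_sub_cancel_left]; exact posSemidef_conjTranspose_mul_self N)
  have htrace : (K * Kᵀ).trace + (Nᵀ * N).trace = Fintype.card k := by
    simpa using congrArg trace hKN
  refine ⟨Q, hQ, ?_⟩
  rw [trace_sub_mul_transpose_mul_sub_mul hUhat hU hQ]
  linarith

end Trace

section Eigendecomposition

variable [DecidableEq k] [DecidableEq k'] {A : Matrix m m ℝ} {Uhat : Matrix m k ℝ}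
  {What : Matrix m k' ℝ} {D : k → ℝ} {E : k' → ℝ}

lemma mul_eq_mul_diagonal_left (hUhat : Uhatᵀ * Uhat = 1) (hUW : Uhatᵀ * What = 0)
    (hA : A = Uhat * diagonal D * Uhatᵀ + What * diagonal E * Whatᵀ) :
    A * Uhat = Uhat * diagonal D := by
  rw [hA, Matrix.add_mul, Matrix.mul_assoc _ Uhatᵀ, hUhat, Matrix.mul_assoc _ Whatᵀ,
    transpose_mul_comm_eq_zero hUW, Matrix.mul_one, Matrix.mul_zero, add_zero]

lemma mul_eq_mul_diagonal_right (hWhat : Whatᵀ * What = 1) (hUW : Uhatᵀ * What = 0)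
    (hA : A = Uhat * diagonal D * Uhatᵀ + What * diagonal E * Whatᵀ) :
    A * What = What * diagonal E := by
  rw [hA, Matrix.add_mul, Matrix.mul_assoc _ Uhatᵀ, hUW, Matrix.mul_assoc _ Whatᵀ, hWhat,
    Matrix.mul_one, Matrix.mul_zero, zero_add]

lemma transpose_mul_eq_diagonal_mul (hWhat : Whatᵀ * What = 1) (hUW : Uhatᵀ * What = 0)
    (hA : A = Uhat * diagonal D * Uhatᵀ + What * diagonal E * Whatᵀ) :
    Whatᵀ * A = diagonal E * Whatᵀ := by
  rw [hA, Matrix.mul_add, ← Matrix.mul_assoc, ← Matrix.mul_assoc, transpose_mul_comm_eq_zero hUW,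
    ← Matrix.mul_assoc, ← Matrix.mul_assoc, hWhat, Matrix.zero_mul, Matrix.zero_mul,
    Matrix.one_mul, zero_add]

end Eigendecomposition

end Matrix

section OpNorm

variable {n : ℕ}

lemma norm_toLp_sq_eq_dotProduct (x : Fin n → ℝ) : ‖WithLp.toLp 2 x‖ ^ 2 = x ⬝ᵥ x := by
  rw [← real_inner_self_eq_norm_sq, EuclideanSpace.inner_toLp_toLp, star_trivial]

lemma norm_toLp_mulVec_le_opNorm_mul (M : Matrix (Fin n) (Fin n) ℝ) (x : Fin n → ℝ) :
    ‖WithLp.toLp 2 (M *ᵥ x)‖ ≤ opNorm M * ‖WithLp.toLp 2 x‖ :=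
  (toEuclideanCLM (𝕜 := ℝ) M).le_opNorm (WithLp.toLp 2 x)

lemma mulVec_dotProduct_mulVec_le_opNorm_sq (M : Matrix (Fin n) (Fin n) ℝ) (x : Fin n → ℝ) :
    (M *ᵥ x) ⬝ᵥ (M *ᵥ x) ≤ opNorm M ^ 2 * (x ⬝ᵥ x) := by
  rw [← norm_toLp_sq_eq_dotProduct, ← norm_toLp_sq_eq_dotProduct, ← mul_pow]
  exact pow_le_pow_left₀ (norm_nonneg _) (norm_toLp_mulVec_le_opNorm_mul M x) 2

lemma dotProduct_mulVec_le_opNorm_mul (M : Matrix (Fin n) (Fin n) ℝ) (x : Fin n → ℝ) :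
    x ⬝ᵥ (M *ᵥ x) ≤ opNorm M * (x ⬝ᵥ x) := by
  have h := real_inner_le_norm (WithLp.toLp 2 (M *ᵥ x)) (WithLp.toLp 2 x)
  rw [EuclideanSpace.inner_toLp_toLp, star_trivial] at h
  calc x ⬝ᵥ (M *ᵥ x) ≤ opNorm M * ‖WithLp.toLp 2 x‖ * ‖WithLp.toLp 2 x‖ :=
        h.trans (mul_le_mul_of_nonneg_right (norm_toLp_mulVec_le_opNorm_mul M x) (norm_nonneg _))
    _ = opNorm M * (x ⬝ᵥ x) := by rw [mul_assoc, ← sq, norm_toLp_sq_eq_dotProduct]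

lemma trace_transpose_mul_self_mul_le_opNorm {κ : Type*} [Fintype κ] [DecidableEq κ]
    (M : Matrix (Fin n) (Fin n) ℝ) {U : Matrix (Fin n) κ ℝ} (hU : Uᵀ * U = 1) :
    ((M * U)ᵀ * (M * U)).trace ≤ Fintype.card κ * opNorm M ^ 2 := by
  have hcol : ∀ j, ((M * U)ᵀ * (M * U)) j j = (M *ᵥ U.col j) ⬝ᵥ (M *ᵥ U.col j) := by
    intro j; simp [mul_apply, dotProduct, mulVec, mul_comm]
  have hunit : ∀ j, U.col j ⬝ᵥ U.col j = 1 := by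
    intro j; simpa [mul_apply, dotProduct] using congrFun (congrFun hU j) j
  calc ((M * U)ᵀ * (M * U)).trace = ∑ j, (M *ᵥ U.col j) ⬝ᵥ (M *ᵥ U.col j) :=
        Finset.sum_congr rfl fun j _ => hcol j
    _ ≤ ∑ _j : κ, opNorm M ^ 2 := Finset.sum_le_sum fun j _ => by
        simpa [hunit j] using mulVec_dotProduct_mulVec_le_opNorm_sq M (U.col j)
    _ = Fintype.card κ * opNorm M ^ 2 := by simp

end OpNorm

section Weyl

theorem le_opNorm_sub_of_orthonormal_eigenvectors {n : ℕ} {ι κ : Type*} [Fintype ι]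
    [DecidableEq ι] [Fintype κ] {A : Matrix (Fin n) (Fin n) ℝ} {G : Matrix (Fin n) ι ℝ}
    {d : ι → ℝ} (hG : Gᵀ * G = 1) (hAG : A * G = G * diagonal d)
    (U : Matrix (Fin n) κ ℝ) (B : Matrix κ (Fin n) ℝ) (hcard : Fintype.card κ < Fintype.card ι)
    {l : ℝ} (hd : ∀ i, l ≤ d i) : l ≤ opNorm (A - U * B) := by
  obtain ⟨c, hc0, hc⟩ := exists_ne_zero_mulVec_eq_zero_of_card_lt (Uᵀ * G) hcard
  set v := G *ᵥ c
  have hGv : Gᵀ *ᵥ v = c := by rw [mulVec_mulVec, hG, one_mulVec]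
  have hvv : v ⬝ᵥ v = c ⬝ᵥ c := by
    rw [dotProduct_mulVec_eq_transpose_mulVec, hGv]
  have hAv : v ⬝ᵥ (A *ᵥ v) = c ⬝ᵥ (diagonal d *ᵥ c) := by
    rw [mulVec_mulVec, hAG, ← mulVec_mulVec, dotProduct_mulVec_eq_transpose_mulVec, hGv]
  have hUBv : v ⬝ᵥ ((U * B) *ᵥ v) = 0 := by
    rw [← mulVec_mulVec, dotProduct_mulVec_eq_transpose_mulVec, mulVec_mulVec, hc,
      zero_dotProduct]
  have hd' : l * (c ⬝ᵥ c) ≤ c ⬝ᵥ (diagonal d *ᵥ c) := by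
    simp only [dotProduct, mulVec_diagonal, Finset.mul_sum]
    exact Finset.sum_le_sum fun i _ => by nlinarith [hd i, mul_self_nonneg (c i)]
  have hpos : 0 < c ⬝ᵥ c := by
    simpa [star_trivial] using dotProduct_self_star_pos_iff.mpr hc0
  refine le_of_mul_le_mul_right ?_ hpos
  calc l * (c ⬝ᵥ c) ≤ v ⬝ᵥ ((A - U * B) *ᵥ v) := by
        rw [sub_mulVec, dotProduct_sub, hUBv, sub_zero, hAv]; exact hd'
    _ ≤ opNorm (A - U * B) * (c ⬝ᵥ c) := hvv ▸ dotProduct_mulVec_le_opNorm_mul _ v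

variable {n : ℕ} {κ κ' : Type*} [Fintype κ] [Fintype κ'] [DecidableEq κ] [DecidableEq κ']
  {A : Matrix (Fin n) (Fin n) ℝ} {Uhat : Matrix (Fin n) κ ℝ} {What : Matrix (Fin n) κ' ℝ}
  {D : κ → ℝ} {E : κ' → ℝ}

theorem bottom_eigenvalue_le_opNorm_sub_mul (hUhat : Uhatᵀ * Uhat = 1) (hWhat : Whatᵀ * What = 1)
    (hUW : Uhatᵀ * What = 0) (hA : A = Uhat * diagonal D * Uhatᵀ + What * diagonal E * Whatᵀ)
    (htop : ∀ i j, E j ≤ D i) (U : Matrix (Fin n) κ ℝ) (B : Matrix κ (Fin n) ℝ) (j : κ') :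
    E j ≤ opNorm (A - U * B) := by
  set w : Matrix (Fin n) Unit ℝ := What.submatrix id fun _ => j
  have hww : wᵀ * w = 1 := by
    ext; simpa [w, mul_apply] using congrFun (congrFun hWhat j) j
  have hUw : Uhatᵀ * w = 0 := by
    ext i; simpa [w, mul_apply] using congrFun (congrFun hUW i) j
  have hwU : wᵀ * Uhat = 0 := transpose_mul_comm_eq_zero hUw
  have hAw : A * w = w * diagonal fun _ : Unit => E j := by
    ext i u
    have h := congrFun (congrFun (mul_eq_mul_diagonal_right hWhat hUW hA) i) j
    rw [mul_diagonal] at h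
    rw [mul_diagonal]
    exact h
  refine le_opNorm_sub_of_orthonormal_eigenvectors (G := fromCols Uhat w)
    (d := Sum.elim D fun _ => E j) ?_ ?_ U B (by simp) ?_
  · rw [transpose_fromCols, fromRows_mul_fromCols, hUhat, hww, hUw, hwU, fromBlocks_one]
  · rw [mul_fromCols, ← fromBlocks_diagonal, fromCols_mul_fromBlocks,
      mul_eq_mul_diagonal_left hUhat hUW hA, hAw]
    simp only [Matrix.mul_zero, add_zero, zero_add]
  · rintro (i | _)
    exacts [htop i j, le_rfl]

end Weyl

theorem sq_mul_trace_le_of_eigengap {n : ℕ} {κ κ' : Type*} [Fintype κ] [Fintype κ']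
    [DecidableEq κ] [DecidableEq κ'] {A Abar : Matrix (Fin n) (Fin n) ℝ}
    {Uhat U : Matrix (Fin n) κ ℝ} {What : Matrix (Fin n) κ' ℝ} {E : κ' → ℝ} {Lam : κ → ℝ}
    (hU : Uᵀ * U = 1) (hC : Uhat * Uhatᵀ + What * Whatᵀ = 1)
    (hWA : Whatᵀ * A = diagonal E * Whatᵀ) (hAbarU : Abar * U = U * diagonal Lam)
    (hE : ∀ j, E j ≤ opNorm (A - Abar)) {α : ℝ} (hα : 0 < α) (hLam : ∀ i, α ≤ Lam i) :
    α ^ 2 * ((Whatᵀ * U)ᵀ * (Whatᵀ * U)).trace ≤ 4 * Fintype.card κ * opNorm (A - Abar) ^ 2 := by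
  set ε := opNorm (A - Abar)
  set N := Whatᵀ * U
  have hN : (Nᵀ * N).trace ≤ Fintype.card κ := by
    simpa only [hU, trace_one] using trace_transpose_mul_self_transpose_mul_le hC U
  rcases le_or_gt α (2 * ε) with hle | hlt
  · nlinarith [mul_le_mul_of_nonneg_left hN (sq_nonneg α), pow_le_pow_left₀ hα.le hle 2,
      trace_transpose_mul_self_nonneg N]
  · have hF : diagonal E * N - N * diagonal Lam = Whatᵀ * ((A - Abar) * U) := by
      rw [Matrix.sub_mul, Matrix.mul_sub, hAbarU, ← Matrix.mul_assoc, ← Matrix.mul_assoc, hWA]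
      simp only [N, Matrix.mul_assoc]
    have hgap := sq_mul_trace_le_of_gap N E Lam (δ := α / 2) (by positivity)
      fun j i => by linarith [hE j, hLam i]
    have hFε := (trace_transpose_mul_self_transpose_mul_le hC ((A - Abar) * U)).trans
      (trace_transpose_mul_self_mul_le_opNorm (A - Abar) hU)
    rw [hF] at hgap
    nlinarith

/-- Davis–Kahan sin-Θ (Lei–Rinaldo variant): if `Ā = U Λ Uᵀ` has rank `r` with all nonzero
eigenvalues at least `α > 0`, `A = Û D Ûᵀ + Ŵ E Ŵᵀ` is a full eigendecomposition of `A`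
with `D` its `r` largest eigenvalues, then there is an orthogonal `Q` with
`‖Û − U Q‖_F ≤ (2√(2r)/α) ‖A − Ā‖`. -/
theorem stmt13 (n r : ℕ)
    (A Abar : Matrix (Fin n) (Fin n) ℝ)
    (Uhat U : Matrix (Fin n) (Fin r) ℝ) (What : Matrix (Fin n) (Fin (n - r)) ℝ)
    (hUhat : Uhatᵀ * Uhat = 1) (hWhat : Whatᵀ * What = 1) (hUW : Uhatᵀ * What = 0)
    (hU : Uᵀ * U = 1)
    (D : Fin r → ℝ) (Ev : Fin (n - r) → ℝ) (Lam : Fin r → ℝ)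
    (hA : A = Uhat * Matrix.diagonal D * Uhatᵀ + What * Matrix.diagonal Ev * Whatᵀ)
    (htop : ∀ i j, Ev j ≤ D i)
    (hAbar : Abar = U * Matrix.diagonal Lam * Uᵀ)
    (α : ℝ) (hα : 0 < α) (hLam : ∀ i, α ≤ Lam i) :
    ∃ Q : Matrix (Fin r) (Fin r) ℝ, Qᵀ * Q = 1 ∧
      frobNorm (Uhat - U * Q) ≤ 2 * Real.sqrt (2 * r) / α * opNorm (A - Abar) := by
  set ε := opNorm (A - Abar)
  have hε : 0 ≤ ε := norm_nonneg _
  have hrn : r ≤ n := by simpa using card_le_card_of_transpose_mul_self_eq_one hU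
  have hC : Uhat * Uhatᵀ + What * Whatᵀ = 1 := mul_transpose_add_mul_transpose_eq_one
    ((finCongr (by omega)).trans finSumFinEquiv.symm) hUhat hWhat hUW
  have hEv : ∀ j, Ev j ≤ ε := by
    simpa only [← Matrix.mul_assoc, ← hAbar] using
      bottom_eigenvalue_le_opNorm_sub_mul hUhat hWhat hUW hA htop U (diagonal Lam * Uᵀ)
  have hAbarU : Abar * U = U * diagonal Lam := by rw [hAbar, Matrix.mul_assoc, hU, Matrix.mul_one]
  have hN := sq_mul_trace_le_of_eigengap hU hC (transpose_mul_eq_diagonal_mul hWhat hUW hA)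
    hAbarU hEv hα hLam
  obtain ⟨Q, hQ, hdist⟩ := exists_orthogonal_trace_sub_mul_le hUhat hU hC
  refine ⟨Q, hQ, ?_⟩
  rw [frobNorm, ← trace_transpose_mul_self_eq_sum, sqrt_le_left (mul_nonneg (by positivity) hε)]
  rw [Fintype.card_fin] at hN
  calc _ ≤ 8 * r * ε ^ 2 / α ^ 2 := by rw [le_div_iff₀ (by positivity)]; nlinarith
    _ = (2 * √(2 * r) / α * ε) ^ 2 := by
        rw [div_mul_eq_mul_div, div_pow, mul_pow, mul_pow, sq_sqrt (by positivity)]; ring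
end

section
/- Let J_{m} = η J_{m-1} + K Λ Kᵀ where J_{m-1} = U Π Uᵀ with U ∈ ℝ^{n×r} having orthonormal columns, K ∈ ℝ^{n×2}, Λ ∈ ℝ^{2×2} diagonal. Let R = (I − U Uᵀ)K and P an n×p matrix with orthonormal columns whose column span contains the column span of R and is orthogonal to the column span of U. Then J_m = [U P] Γ [U P]ᵀ, where Γ = [[η Π, 0],[0, 0]] + [UᵀK; PᵀR] Λ [UᵀK; PᵀR]ᵀ is an (r+p)×(r+p) symmetric matrix. -/
open Matrix

/-! The column-span hypothesis says exactly that `K = [U P] [UᵀK; PᵀR]`, so the rank-two term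
`K Λ Kᵀ` factors through `[U P]`, while the block `[[η Π, 0], [0, 0]]` only sees the `U` columns and
contributes `η U Π Uᵀ`. -/

section

variable {α l m₁ m₂ n₁ n₂ o : Type*} [Fintype m₁] [Fintype m₂] [Fintype n₁] [Fintype n₂]

theorem fromCols_mul_fromBlocks_zero_mul_fromRows [Semiring α]
    (A : Matrix l m₁ α) (B : Matrix l m₂ α) (M : Matrix m₁ n₁ α)
    (C : Matrix n₁ o α) (D : Matrix n₂ o α) :
    fromCols A B * (fromBlocks M 0 0 0 : Matrix (m₁ ⊕ m₂) (n₁ ⊕ n₂) α) * fromRows C D =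
      A * M * C := by
  simp only [fromCols_mul_fromBlocks, Matrix.mul_zero, add_zero, fromCols_mul_fromRows,
    Matrix.zero_mul]

theorem mul_mul_mul_transpose_of_mul_eq [CommSemiring α] {X : Matrix l m₁ α}
    {Y : Matrix m₁ n₁ α} {K : Matrix l n₁ α} (h : X * Y = K) (D : Matrix n₁ n₁ α) :
    X * (Y * D * Yᵀ) * Xᵀ = K * D * Kᵀ := by
  rw [← h, transpose_mul]
  simp only [Matrix.mul_assoc]

end

theorem stmt15_general (n r p : ℕ) (η : ℝ)
    (U : Matrix (Fin n) (Fin r) ℝ) (Pi : Fin r → ℝ)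
    (K : Matrix (Fin n) (Fin 2) ℝ) (Lam : Fin 2 → ℝ)
    (P : Matrix (Fin n) (Fin p) ℝ)
    (R : Matrix (Fin n) (Fin 2) ℝ)
    (hspan : K - U * (Uᵀ * K) = P * (Pᵀ * R)) :
    η • (U * Matrix.diagonal Pi * Uᵀ) + K * Matrix.diagonal Lam * Kᵀ =
      fromCols U P *
        (Matrix.fromBlocks (η • Matrix.diagonal Pi) 0 0 0 +
          fromRows (Uᵀ * K) (Pᵀ * R) * Matrix.diagonal Lam * (fromRows (Uᵀ * K) (Pᵀ * R))ᵀ) *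
        (fromCols U P)ᵀ := by
  have hK : fromCols U P * fromRows (Uᵀ * K) (Pᵀ * R) = K := by
    rw [fromCols_mul_fromRows, ← hspan, add_sub_cancel]
  rw [Matrix.mul_add, Matrix.add_mul, mul_mul_mul_transpose_of_mul_eq hK, transpose_fromCols,
    fromCols_mul_fromBlocks_zero_mul_fromRows, Matrix.mul_smul, Matrix.smul_mul]

/-- Rank-two EVD update identity: with `J_{m-1} = U Π Uᵀ`, `R = (I − U Uᵀ) K`, `P` an
orthonormal basis orthogonal to `col U` with `col R ⊆ col P`, one has
`η J_{m-1} + K Λ Kᵀ = [U P] Γ [U P]ᵀ` where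
`Γ = [[η Π, 0],[0,0]] + [UᵀK; PᵀR] Λ [UᵀK; PᵀR]ᵀ`. -/
theorem stmt15 (n r p : ℕ) (η : ℝ)
    (U : Matrix (Fin n) (Fin r) ℝ) (Pi : Fin r → ℝ)
    (K : Matrix (Fin n) (Fin 2) ℝ) (Lam : Fin 2 → ℝ)
    (P : Matrix (Fin n) (Fin p) ℝ)
    (hU : Uᵀ * U = 1) (hP : Pᵀ * P = 1) (hPU : Pᵀ * U = 0)
    (R : Matrix (Fin n) (Fin 2) ℝ) (hR : R = (1 - U * Uᵀ) * K)
    (hspan : K - U * (Uᵀ * K) = P * (Pᵀ * R)) :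
    η • (U * Matrix.diagonal Pi * Uᵀ) + K * Matrix.diagonal Lam * Kᵀ =
      fromCols U P *
        (Matrix.fromBlocks (η • Matrix.diagonal Pi) 0 0 0 +
          fromRows (Uᵀ * K) (Pᵀ * R) * Matrix.diagonal Lam * (fromRows (Uᵀ * K) (Pᵀ * R))ᵀ) *
        (fromCols U P)ᵀ :=
  stmt15_general n r p η U Pi K Lam P R hspan
end
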